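/- arXiv:1605.02458 — 2 statements merged into one kernel-verified Lean document; each statement's English description precedes it below -/
import Mathlib

section
/- For all real numbers t₁, t₂, x₁, x₂ and all μ with 0 < μ < 1: μ·(√((μt₁ - x₁)² + (μt₂ - x₂)²) + √((μt₁ + x₁)² + (μt₂ + x₂)²)) ≤ √((t₁ - x₁)² + (t₂ - x₂)²) + √((t₁ + x₁)² + (t₂ + x₂)²), with equality only if t₁ = t₂ = x₁ = x₂ = 0. -/
lemma tri_aux (a b c d : ℝ) :
    Real.sqrt ((a + b) ^ 2 + (c + d) ^ 2) ≤
      Real.sqrt (a ^ 2 + c ^ 2) + Real.sqrt (b ^ 2 + d ^ 2) := by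
  have hA : (0:ℝ) ≤ a ^ 2 + c ^ 2 := by positivity
  have hB : (0:ℝ) ≤ b ^ 2 + d ^ 2 := by positivity
  have sA := Real.sq_sqrt hA
  have sB := Real.sq_sqrt hB
  have nA := Real.sqrt_nonneg (a ^ 2 + c ^ 2)
  have nB := Real.sqrt_nonneg (b ^ 2 + d ^ 2)
  have key : Real.sqrt (a ^ 2 + c ^ 2) * Real.sqrt (b ^ 2 + d ^ 2) ≥ a * b + c * d := by
    nlinarith [sq_nonneg (a * d - c * b), mul_nonneg nA nB,
      sq_nonneg (Real.sqrt (a ^ 2 + c ^ 2) * Real.sqrt (b ^ 2 + d ^ 2) + (a * b + c * d))]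
  have h : (a + b) ^ 2 + (c + d) ^ 2 ≤
      (Real.sqrt (a ^ 2 + c ^ 2) + Real.sqrt (b ^ 2 + d ^ 2)) ^ 2 := by nlinarith
  calc Real.sqrt ((a + b) ^ 2 + (c + d) ^ 2)
      ≤ Real.sqrt ((Real.sqrt (a ^ 2 + c ^ 2) + Real.sqrt (b ^ 2 + d ^ 2)) ^ 2) :=
        Real.sqrt_le_sqrt h
    _ = _ := Real.sqrt_sq (by positivity)

lemma scale_aux (k u v : ℝ) (hk : 0 ≤ k) :
    Real.sqrt ((k * u) ^ 2 + (k * v) ^ 2) = k * Real.sqrt (u ^ 2 + v ^ 2) := by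
  rw [show (k * u) ^ 2 + (k * v) ^ 2 = k ^ 2 * (u ^ 2 + v ^ 2) by ring,
    Real.sqrt_mul (sq_nonneg k), Real.sqrt_sq hk]

/-- Shrinking inequality for the l₁-norm coherence under local cloning:
μ·(√((μt₁−x₁)²+(μt₂−x₂)²) + √((μt₁+x₁)²+(μt₂+x₂)²)) ≤
√((t₁−x₁)²+(t₂−x₂)²) + √((t₁+x₁)²+(t₂+x₂)²), with equality only at the origin. -/
theorem cloning_shrink_ineq (t₁ t₂ x₁ x₂ μ : ℝ) (hμ0 : 0 < μ) (hμ1 : μ < 1) :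
    μ * (Real.sqrt ((μ * t₁ - x₁) ^ 2 + (μ * t₂ - x₂) ^ 2) +
          Real.sqrt ((μ * t₁ + x₁) ^ 2 + (μ * t₂ + x₂) ^ 2)) ≤
      Real.sqrt ((t₁ - x₁) ^ 2 + (t₂ - x₂) ^ 2) +
        Real.sqrt ((t₁ + x₁) ^ 2 + (t₂ + x₂) ^ 2) ∧
    (μ * (Real.sqrt ((μ * t₁ - x₁) ^ 2 + (μ * t₂ - x₂) ^ 2) +
          Real.sqrt ((μ * t₁ + x₁) ^ 2 + (μ * t₂ + x₂) ^ 2)) =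
      Real.sqrt ((t₁ - x₁) ^ 2 + (t₂ - x₂) ^ 2) +
        Real.sqrt ((t₁ + x₁) ^ 2 + (t₂ + x₂) ^ 2) →
      t₁ = 0 ∧ t₂ = 0 ∧ x₁ = 0 ∧ x₂ = 0) := by
  set u₁ := t₁ - x₁ with hu₁
  set u₂ := t₂ - x₂ with hu₂
  set v₁ := t₁ + x₁ with hv₁
  set v₂ := t₂ + x₂ with hv₂
  have hk1 : (0:ℝ) ≤ (1 + μ) / 2 := by linarith
  have hk2 : (0:ℝ) ≤ (1 - μ) / 2 := by linarith
  have nU := Real.sqrt_nonneg (u₁ ^ 2 + u₂ ^ 2)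
  have nV := Real.sqrt_nonneg (v₁ ^ 2 + v₂ ^ 2)
  -- first sqrt bound
  have h1 : Real.sqrt ((μ * t₁ - x₁) ^ 2 + (μ * t₂ - x₂) ^ 2) ≤
      (1 + μ) / 2 * Real.sqrt (u₁ ^ 2 + u₂ ^ 2) +
      (1 - μ) / 2 * Real.sqrt (v₁ ^ 2 + v₂ ^ 2) := by
    have e1 : μ * t₁ - x₁ = (1 + μ) / 2 * u₁ + (-((1 - μ) / 2)) * v₁ := by
      rw [hu₁, hv₁]; ring
    have e2 : μ * t₂ - x₂ = (1 + μ) / 2 * u₂ + (-((1 - μ) / 2)) * v₂ := by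
      rw [hu₂, hv₂]; ring
    rw [e1, e2]
    refine (tri_aux _ _ _ _).trans ?_
    rw [scale_aux _ _ _ hk1]
    have : ((-((1 - μ) / 2)) * v₁) ^ 2 + ((-((1 - μ) / 2)) * v₂) ^ 2
        = ((1 - μ) / 2 * v₁) ^ 2 + ((1 - μ) / 2 * v₂) ^ 2 := by ring
    rw [this, scale_aux _ _ _ hk2]
  have h2 : Real.sqrt ((μ * t₁ + x₁) ^ 2 + (μ * t₂ + x₂) ^ 2) ≤
      (1 - μ) / 2 * Real.sqrt (u₁ ^ 2 + u₂ ^ 2) +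
      (1 + μ) / 2 * Real.sqrt (v₁ ^ 2 + v₂ ^ 2) := by
    have e1 : μ * t₁ + x₁ = (-((1 - μ) / 2)) * u₁ + (1 + μ) / 2 * v₁ := by
      rw [hu₁, hv₁]; ring
    have e2 : μ * t₂ + x₂ = (-((1 - μ) / 2)) * u₂ + (1 + μ) / 2 * v₂ := by
      rw [hu₂, hv₂]; ring
    rw [e1, e2]
    refine (tri_aux _ _ _ _).trans ?_
    rw [scale_aux _ _ _ hk1]
    have : ((-((1 - μ) / 2)) * u₁) ^ 2 + ((-((1 - μ) / 2)) * u₂) ^ 2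
        = ((1 - μ) / 2 * u₁) ^ 2 + ((1 - μ) / 2 * u₂) ^ 2 := by ring
    rw [this, scale_aux _ _ _ hk2]
  have hsum : Real.sqrt ((μ * t₁ - x₁) ^ 2 + (μ * t₂ - x₂) ^ 2) +
      Real.sqrt ((μ * t₁ + x₁) ^ 2 + (μ * t₂ + x₂) ^ 2) ≤
      Real.sqrt (u₁ ^ 2 + u₂ ^ 2) + Real.sqrt (v₁ ^ 2 + v₂ ^ 2) := by linarith
  have nS1 := Real.sqrt_nonneg ((μ * t₁ - x₁) ^ 2 + (μ * t₂ - x₂) ^ 2)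
  have nS2 := Real.sqrt_nonneg ((μ * t₁ + x₁) ^ 2 + (μ * t₂ + x₂) ^ 2)
  have hmain : μ * (Real.sqrt ((μ * t₁ - x₁) ^ 2 + (μ * t₂ - x₂) ^ 2) +
      Real.sqrt ((μ * t₁ + x₁) ^ 2 + (μ * t₂ + x₂) ^ 2)) ≤
      Real.sqrt (u₁ ^ 2 + u₂ ^ 2) + Real.sqrt (v₁ ^ 2 + v₂ ^ 2) := by
    have h3 := mul_le_mul_of_nonneg_left hsum hμ0.le
    have p1 : (0:ℝ) ≤ (1 - μ) * Real.sqrt (u₁ ^ 2 + u₂ ^ 2) := mul_nonneg (by linarith) nU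
    have p2 : (0:ℝ) ≤ (1 - μ) * Real.sqrt (v₁ ^ 2 + v₂ ^ 2) := mul_nonneg (by linarith) nV
    linarith
  refine ⟨hmain, fun heq => ?_⟩
  have h3 := mul_le_mul_of_nonneg_left hsum hμ0.le
  have hμ' : (0:ℝ) < 1 - μ := by linarith
  have hprod : (1 - μ) * (Real.sqrt (u₁ ^ 2 + u₂ ^ 2) + Real.sqrt (v₁ ^ 2 + v₂ ^ 2)) ≤
      (1 - μ) * 0 := by rw [mul_zero]; linarith
  have hS0 := le_of_mul_le_mul_left hprod hμ'
  have hUz : Real.sqrt (u₁ ^ 2 + u₂ ^ 2) = 0 := le_antisymm (by linarith) nU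
  have hVz : Real.sqrt (v₁ ^ 2 + v₂ ^ 2) = 0 := le_antisymm (by linarith) nV
  have hU : u₁ ^ 2 + u₂ ^ 2 = 0 := by
    have h5 := Real.sqrt_eq_zero'.mp hUz
    have := sq_nonneg u₁; have := sq_nonneg u₂; linarith
  have hV : v₁ ^ 2 + v₂ ^ 2 = 0 := by
    have h5 := Real.sqrt_eq_zero'.mp hVz
    have := sq_nonneg v₁; have := sq_nonneg v₂; linarith
  have e1 : u₁ = 0 := pow_eq_zero_iff two_ne_zero |>.mp
    (le_antisymm (by linarith [sq_nonneg u₂]) (sq_nonneg u₁))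
  have e2 : u₂ = 0 := pow_eq_zero_iff two_ne_zero |>.mp
    (le_antisymm (by linarith [sq_nonneg u₁]) (sq_nonneg u₂))
  have e3 : v₁ = 0 := pow_eq_zero_iff two_ne_zero |>.mp
    (le_antisymm (by linarith [sq_nonneg v₂]) (sq_nonneg v₁))
  have e4 : v₂ = 0 := pow_eq_zero_iff two_ne_zero |>.mp
    (le_antisymm (by linarith [sq_nonneg v₁]) (sq_nonneg v₂))
  rw [hu₁] at e1; rw [hu₂] at e2; rw [hv₁] at e3; rw [hv₂] at e4
  exact ⟨by linarith, by linarith, by linarith, by linarith⟩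
end

section
/- Let a₂ = √((t₁−x₁)² + (t₂−x₂)²) + √((t₁+x₁)² + (t₂+x₂)²) and b₂ = μ·(√((μt₁−x₁)² + (μt₂−x₂)²) + √((μt₁+x₁)² + (μt₂+x₂)²)) for reals t₁, t₂, x₁, x₂ and μ ∈ (0,1). If (t₁, t₂) ≠ (0,0) or (x₁, x₂) ≠ (0,0), then b₂ < a₂. -/
/-!
With `u = z - w` and `v = z + w`, the vectors `μ z ∓ w` are the combinations
`((1 + μ) / 2) u - ((1 - μ) / 2) v` and `((1 + μ) / 2) v - ((1 - μ) / 2) u`, whose coefficients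
are nonnegative with sum `1` when `|μ| ≤ 1`. The triangle inequality therefore gives
`‖μ z - w‖ + ‖μ z + w‖ ≤ ‖z - w‖ + ‖z + w‖`, and the factor `μ`, of modulus `< 1`, makes the inequality
strict as soon as the right-hand side is positive, i.e. unless `z = w = 0`.
Identifying `ℝ²` with `ℂ` turns each square root of the statement into such a norm.
-/

section NormedSpace

variable {E : Type*}

theorem norm_smul_sub_add_norm_smul_add_le [SeminormedAddCommGroup E] [NormedSpace ℝ E]
    {μ : ℝ} (hμ : |μ| ≤ 1) (z w : E) :
    ‖μ • z - w‖ + ‖μ • z + w‖ ≤ ‖z - w‖ + ‖z + w‖ := by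
  obtain ⟨hμl, hμr⟩ := abs_le.1 hμ
  set a : ℝ := (1 + μ) / 2
  set b : ℝ := (1 - μ) / 2
  have ha : 0 ≤ a := by simp only [a]; linarith
  have hb : 0 ≤ b := by simp only [b]; linarith
  have hsub : μ • z - w = a • (z - w) - b • (z + w) := by
    simp only [a, b]; module
  have hadd : μ • z + w = a • (z + w) - b • (z - w) := by
    simp only [a, b]; module
  have hsub_le : ‖μ • z - w‖ ≤ a * ‖z - w‖ + b * ‖z + w‖ := by
    rw [hsub, ← norm_smul_of_nonneg ha, ← norm_smul_of_nonneg hb]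
    exact norm_sub_le _ _
  have hadd_le : ‖μ • z + w‖ ≤ a * ‖z + w‖ + b * ‖z - w‖ := by
    rw [hadd, ← norm_smul_of_nonneg ha, ← norm_smul_of_nonneg hb]
    exact norm_sub_le _ _
  have hab : a + b = 1 := by simp only [a, b]; ring
  linear_combination hsub_le + hadd_le + (‖z - w‖ + ‖z + w‖) * hab

theorem norm_sub_add_norm_add_pos [NormedAddCommGroup E] [NormedSpace ℝ E] {z w : E}
    (h : z ≠ 0 ∨ w ≠ 0) : 0 < ‖z - w‖ + ‖z + w‖ := by
  have hz : ‖(2 : ℝ) • z‖ ≤ ‖z - w‖ + ‖z + w‖ := by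
    rw [show (2 : ℝ) • z = (z - w) + (z + w) by module]
    exact norm_add_le _ _
  have hw : ‖(2 : ℝ) • w‖ ≤ ‖z - w‖ + ‖z + w‖ := by
    rw [show (2 : ℝ) • w = (z + w) - (z - w) by module]
    exact (norm_sub_le _ _).trans_eq (add_comm _ _)
  simp only [norm_smul, Real.norm_two] at hz hw
  rcases h with h | h
  · linarith [norm_pos_iff.2 h]
  · linarith [norm_pos_iff.2 h]

theorem mul_norm_smul_sub_add_norm_smul_add_lt [NormedAddCommGroup E] [NormedSpace ℝ E]
    {μ : ℝ} (hμ : |μ| < 1) {z w : E} (h : z ≠ 0 ∨ w ≠ 0) :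
    μ * (‖μ • z - w‖ + ‖μ • z + w‖) < ‖z - w‖ + ‖z + w‖ :=
  calc μ * (‖μ • z - w‖ + ‖μ • z + w‖)
      ≤ |μ| * (‖μ • z - w‖ + ‖μ • z + w‖) :=
        mul_le_mul_of_nonneg_right (le_abs_self μ) (by positivity)
    _ ≤ |μ| * (‖z - w‖ + ‖z + w‖) :=
        mul_le_mul_of_nonneg_left (norm_smul_sub_add_norm_smul_add_le hμ.le z w) (abs_nonneg μ)
    _ < ‖z - w‖ + ‖z + w‖ := mul_lt_of_lt_one_left (norm_sub_add_norm_add_pos h) hμ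

end NormedSpace

/-- Strict shrinking inequality b₂ < a₂ for the Buzek–Hillery local cloner:
if (t₁,t₂) ≠ (0,0) or (x₁,x₂) ≠ (0,0) and μ ∈ (0,1), then
μ(√((μt₁−x₁)²+(μt₂−x₂)²)+√((μt₁+x₁)²+(μt₂+x₂)²)) <
√((t₁−x₁)²+(t₂−x₂)²)+√((t₁+x₁)²+(t₂+x₂)²). -/
theorem strict_shrink_ineq (t₁ t₂ x₁ x₂ μ : ℝ) (hμ0 : 0 < μ) (hμ1 : μ < 1)
    (hne : (t₁, t₂) ≠ (0, 0) ∨ (x₁, x₂) ≠ (0, 0)) :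
    μ * (Real.sqrt ((μ * t₁ - x₁) ^ 2 + (μ * t₂ - x₂) ^ 2) +
          Real.sqrt ((μ * t₁ + x₁) ^ 2 + (μ * t₂ + x₂) ^ 2)) <
      Real.sqrt ((t₁ - x₁) ^ 2 + (t₂ - x₂) ^ 2) +
        Real.sqrt ((t₁ + x₁) ^ 2 + (t₂ + x₂) ^ 2) := by
  have hzw : (⟨t₁, t₂⟩ : ℂ) ≠ 0 ∨ (⟨x₁, x₂⟩ : ℂ) ≠ 0 := by
    simpa [Complex.ext_iff, Prod.ext_iff] using hne
  simpa [Complex.norm_eq_sqrt_sq_add_sq] using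
    mul_norm_smul_sub_add_norm_smul_add_lt (abs_lt.2 ⟨by linarith, hμ1⟩) hzw
end
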